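/- Let l be a natural number, a > 0 a real number, and x₁ ∈ ℝ. Set z = x₁ + a·i ∈ ℂ. Then the l-th derivative at x₁ of the function ℝ → ℝ, x ↦ (x² + a²)^{−2}, equals (as a complex number) (−1)^{l}·l!·2·(u − ū)/(|z|⁴·(z−z̄)³), where u = (z̄²/z^{l})·(z + (l+1)·(z−z̄)/2); equivalently it equals the real number −(−1)^{l}·l!·Im(u)/(2·a³·(x₁²+a²)²). -/

import Mathlib

/-!
For real `s`, `(s² + a²)⁻² = |s + a i|⁻⁴`, and pairing each pole of `(w w̄)⁻²` with its conjugate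
writes `|w|⁻⁴` as the real part of `2 / (d² w²) + 4 / (d³ w)`, where `d = w - w̄ = 2 a i` does not
depend on `s`. Taking the real part commutes with differentiation in `s`, and
`dˡ/dsˡ (s + c)⁻ᵏ = (-1)ˡ k (k+1) ⋯ (k+l-1) (s + c)^(-k-l)`. At `s = x₁` we have `s + a i = z`,
and `Re v = (v + v̄) / 2` turns the result into the stated formula.
-/

open Complex

/-- The complex number `z = x₁ + a·i`. -/
noncomputable def zOf (x₁ a : ℝ) : ℂ := (x₁ : ℂ) + (a : ℂ) * Complex.I

/-- The complex number `u = (z̄²/z^l)·(z + (l+1)·(z−z̄)/2)`. -/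
noncomputable def uOf (l : ℕ) (z : ℂ) : ℂ :=
  (starRingEnd ℂ z) ^ 2 / z ^ l * (z + ((l : ℂ) + 1) * (z - starRingEnd ℂ z) / 2)

open ComplexConjugate Nat

theorem ContinuousLinearMap.iteratedDeriv_comp_left {𝕜 F G : Type*} [NontriviallyNormedField 𝕜]
    [NormedAddCommGroup F] [NormedSpace 𝕜 F] [NormedAddCommGroup G] [NormedSpace 𝕜 G]
    {f : 𝕜 → F} {x : 𝕜} {n : WithTop ℕ∞} (g : F →L[𝕜] G) (hf : ContDiffAt 𝕜 n f x) {i : ℕ}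
    (hi : i ≤ n) : iteratedDeriv i (g ∘ f) x = g (iteratedDeriv i f x) := by
  simp [iteratedDeriv_eq_iteratedFDeriv, g.iteratedFDeriv_comp_left hf hi]

namespace Complex

lemma ofReal_add_ne_zero {c : ℂ} (hc : c.im ≠ 0) (t : ℝ) : (t : ℂ) + c ≠ 0 := by
  contrapose! hc
  simpa using congrArg im hc

lemma contDiff_inv_ofReal_add_pow {c : ℂ} (hc : c.im ≠ 0) (k : ℕ) {n : WithTop ℕ∞} :
    ContDiff ℝ n fun t : ℝ => (((t : ℂ) + c) ^ k)⁻¹ :=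
  ((ofRealCLM.contDiff.add contDiff_const).pow k).inv
    fun t => pow_ne_zero _ (ofReal_add_ne_zero hc t)

lemma hasDerivAt_inv_ofReal_add_pow {c : ℂ} (hc : c.im ≠ 0) (k : ℕ) (t : ℝ) :
    HasDerivAt (fun s : ℝ => (((s : ℂ) + c) ^ k)⁻¹) (-k * (((t : ℂ) + c) ^ (k + 1))⁻¹) t := by
  have hw := ofReal_add_ne_zero hc t
  convert ((((hasDerivAt_id' (t : ℂ)).add_const c).fun_pow k).fun_inv (pow_ne_zero k hw)).comp_ofReal
    using 1
  rcases k with _ | k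
  · simp
  · rw [Nat.add_sub_cancel]
    field_simp
    ring

lemma iteratedDeriv_inv_ofReal_add_pow {c : ℂ} (hc : c.im ≠ 0) (k n : ℕ) :
    iteratedDeriv n (fun t : ℝ => (((t : ℂ) + c) ^ k)⁻¹) =
      fun t : ℝ => (-1) ^ n * (k.ascFactorial n : ℂ) * (((t : ℂ) + c) ^ (k + n))⁻¹ := by
  induction n with
  | zero => simp
  | succ n ih =>
    funext t
    rw [iteratedDeriv_succ, ih, ((hasDerivAt_inv_ofReal_add_pow hc (k + n) t).const_mul _).deriv,
      ascFactorial_succ]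
    push_cast
    ring

lemma inv_normSq_sq_eq_re (w : ℂ) (hw : w.im ≠ 0) :
    (normSq w ^ 2)⁻¹ = re (2 / (w - conj w) ^ 2 * (w ^ 2)⁻¹ + 4 / (w - conj w) ^ 3 * w⁻¹) := by
  have hw0 : w ≠ 0 := fun h => hw (by simp [h])
  have hd : w - conj w ≠ 0 := by simp [sub_conj, hw]
  apply ofReal_injective
  rw [re_eq_add_conj]
  push_cast
  rw [← mul_conj]
  simp only [map_add, map_mul, map_div₀, map_inv₀, map_pow, map_sub, conj_conj, map_ofNat]
  have hw1 : conj w ≠ 0 := (map_ne_zero _).mpr hw0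
  have hd' : conj w - w ≠ 0 := fun h => hd (by linear_combination -h)
  field_simp
  ring

end Complex

theorem iteratedDeriv_inv_normSq_ofReal_add_sq {c : ℂ} (hc : c.im ≠ 0) (n : ℕ) (t : ℝ) :
    ((iteratedDeriv n (fun s : ℝ => (normSq (s + c) ^ 2)⁻¹) t : ℝ) : ℂ) =
      (-1) ^ n * n ! * 2 * (uOf n (t + c) - conj (uOf n (t + c))) /
        ((normSq (t + c) : ℂ) ^ 2 * ((t : ℂ) + c - conj ((t : ℂ) + c)) ^ 3) := by
  have hsub (s : ℝ) : (s + c : ℂ) - conj (s + c) = c - conj c := by simp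
  have hrepr : (fun s : ℝ => (normSq (s + c) ^ 2)⁻¹) = reCLM ∘ fun s : ℝ =>
      2 / (c - conj c) ^ 2 * (((s : ℂ) + c) ^ 2)⁻¹ + 4 / (c - conj c) ^ 3 * (((s : ℂ) + c) ^ 1)⁻¹ := by
    funext s
    simpa [hsub] using inv_normSq_sq_eq_re (s + c) (by simpa using hc)
  have hsmooth (k : ℕ) : ContDiffAt ℝ n (fun s : ℝ => (((s : ℂ) + c) ^ k)⁻¹) t :=
    (contDiff_inv_ofReal_add_pow hc k).contDiffAt
  have hw : (t : ℂ) + c ≠ 0 := ofReal_add_ne_zero hc t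
  have hw' : conj ((t : ℂ) + c) ≠ 0 := (map_ne_zero _).mpr hw
  have hd : (t + c : ℂ) - conj (t + c) ≠ 0 := by simpa [sub_conj] using hc
  have h2 : ((2 : ℕ).ascFactorial n : ℂ) = (n + 1) * n ! := by
    exact_mod_cast (by simpa [add_comm] using succ_ascFactorial 1 n :
      (2 : ℕ).ascFactorial n = (n + 1) * n !)
  rw [hrepr, reCLM.iteratedDeriv_comp_left
      ((contDiffAt_const.mul (hsmooth 2)).add (contDiffAt_const.mul (hsmooth 1))) le_rfl,
    iteratedDeriv_fun_add (contDiffAt_const.mul (hsmooth 2)) (contDiffAt_const.mul (hsmooth 1)),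
    iteratedDeriv_const_mul _ (hsmooth 2), iteratedDeriv_const_mul _ (hsmooth 1),
    iteratedDeriv_inv_ofReal_add_pow hc, iteratedDeriv_inv_ofReal_add_pow hc, ← hsub t,
    reCLM_apply, re_eq_add_conj, ← mul_conj, one_ascFactorial, h2, uOf]
  beta_reduce
  -- with `w` atomic, `conj w` stays a single nonzero factor for `field_simp`
  generalize (t : ℂ) + c = w at hw hw' hd ⊢
  have hd' : conj w - w ≠ 0 := fun h => hd (by linear_combination -h)
  simp only [map_add, map_mul, map_div₀, map_inv₀, map_pow, map_sub, conj_conj, map_ofNat, map_neg,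
    map_one, map_natCast]
  field_simp
  ring

theorem iteratedDeriv_inv_sq_closed_form (l : ℕ) (a : ℝ) (ha : 0 < a) (x₁ : ℝ) :
    (((iteratedDeriv l (fun x : ℝ => ((x ^ 2 + a ^ 2) ^ 2)⁻¹) x₁ : ℝ) : ℂ) =
      (-1 : ℂ) ^ l * (l.factorial : ℂ) * 2
        * (uOf l (zOf x₁ a) - starRingEnd ℂ (uOf l (zOf x₁ a)))
        / (((‖zOf x₁ a‖ : ℝ) : ℂ) ^ 4
            * (zOf x₁ a - starRingEnd ℂ (zOf x₁ a)) ^ 3))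
    ∧
    (iteratedDeriv l (fun x : ℝ => ((x ^ 2 + a ^ 2) ^ 2)⁻¹) x₁ =
      -((-1 : ℝ) ^ l * (l.factorial : ℝ) * (uOf l (zOf x₁ a)).im
          / (2 * a ^ 3 * (x₁ ^ 2 + a ^ 2) ^ 2))) := by
  have hc : ((a : ℂ) * I).im ≠ 0 := by simpa using ha.ne'
  have hf : (fun x : ℝ => ((x ^ 2 + a ^ 2) ^ 2)⁻¹) = fun s : ℝ => (normSq (s + a * I) ^ 2)⁻¹ := by
    simp [normSq_add_mul_I]
  have hnorm : ((‖zOf x₁ a‖ : ℝ) : ℂ) ^ 4 = (normSq (zOf x₁ a) : ℂ) ^ 2 := by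
    rw [normSq_eq_norm_sq]
    push_cast
    ring
  have h1 := iteratedDeriv_inv_normSq_ofReal_add_sq hc l x₁
  rw [← hf, ← zOf, ← hnorm] at h1
  refine ⟨h1, ofReal_injective ?_⟩
  have hz : normSq (zOf x₁ a) = x₁ ^ 2 + a ^ 2 := normSq_add_mul_I x₁ a
  have hzim : (zOf x₁ a).im = a := by simp [zOf]
  have ha' : (a : ℂ) ≠ 0 := by exact_mod_cast ha.ne'
  rw [h1, sub_conj, sub_conj, hnorm, hz, hzim]
  push_cast
  field_simp
  ring_nf
  simp [I_sq]
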